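/- Suppose R contains ℚ (R is a ℚ-algebra) and let λ : R[X_1,…,X_N] → R be an R-linear map such that λ(M_{jk}(p)) = 0 for all pairs of distinct indices j, k ∈ {1,…,N} and all p, and λ((X·X)^n) = 1 for every integer n ≥ 0. If p ∈ R[X_1,…,X_N] is homogeneous of degree 2n with n ≥ 1, then n!·2^n·(Π_{i=1}^{n}(2n+N−2i))·λ(p) equals the constant coefficient of Δ^n p (the n-fold iterated Laplacian of p, which is a constant polynomial). -/

import Mathlib

open MvPolynomial

/-- The rotation generator `M_{jk} p = X_j ∂_k p − X_k ∂_j p`. -/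
noncomputable def rot {R : Type*} [CommRing R] {N : ℕ} (j k : Fin N)
    (p : MvPolynomial (Fin N) R) : MvPolynomial (Fin N) R :=
  X j * pderiv k p - X k * pderiv j p

/-- The Laplacian `Δ p = Σ_j ∂_j² p`. -/
noncomputable def lap {R : Type*} [CommRing R] {N : ℕ}
    (p : MvPolynomial (Fin N) R) : MvPolynomial (Fin N) R :=
  ∑ j, pderiv j (pderiv j p)

/-- The polynomial `X·X = X_1² + ⋯ + X_N²`. -/
noncomputable def XX (R : Type*) [CommRing R] (N : ℕ) : MvPolynomial (Fin N) R :=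
  ∑ j, X j ^ 2

/-! Summing the relations `λ (M_{jk} (X_j ∂_k q)) = 0` over all `j, k` and applying Euler's
identity twice gives `λ (X·X · Δq) = D (D + N - 2) λ q` for `q` homogeneous of degree `D`.
For `q = (X·X)^k p`, with `p` of degree `d + 2`, the commutation of `Δ` past `(X·X)^k` turns
this into `λ ((X·X)^(k+1) Δp) = (d + 2) (d + N) λ ((X·X)^k p)`, whose factor does not depend
on `k`. Iterating `n` times trades `p` for the constant `Δ^n p` times a power of `X·X`, on which
`λ` is known. -/

namespace MvPolynomial

variable {σ R : Type*} [CommRing R] [Fintype σ]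

theorem IsHomogeneous.sum_X_mul_X_mul_pderiv_pderiv {D : ℕ} {p : MvPolynomial σ R}
    (hp : p.IsHomogeneous D) :
    ∑ j, ∑ k, X j * X k * pderiv j (pderiv k p) = ((D : R) * (D - 1)) • p := by
  have inner (k : σ) :
      ∑ j, X j * X k * pderiv j (pderiv k p) = (D - 1) • (X k * pderiv k p) := by
    simp_rw [mul_right_comm _ (X k), ← Finset.sum_mul, hp.pderiv.sum_X_mul_pderiv,
      smul_mul_assoc, mul_comm]
  rw [Finset.sum_comm, Finset.sum_congr rfl fun k _ => inner k, ← Finset.smul_sum,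
    hp.sum_X_mul_pderiv, smul_smul]
  rcases D with _ | D
  · simp
  · rw [← Nat.cast_smul_eq_nsmul R]
    push_cast
    rw [add_sub_cancel_right, mul_comm]

end MvPolynomial

section Rotations

variable {R : Type*} [CommRing R] {N : ℕ}

theorem rot_self (j : Fin N) (p : MvPolynomial (Fin N) R) : rot j j p = 0 :=
  sub_self _

theorem isHomogeneous_XX : (XX R N).IsHomogeneous 2 :=
  IsHomogeneous.sum _ _ _ fun j _ => isHomogeneous_X_pow j 2

theorem pderiv_XX (i : Fin N) : pderiv i (XX R N) = 2 * X i := by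
  rw [XX, map_sum, Finset.sum_eq_single i
    (fun j _ hj => by rw [pderiv_pow, pderiv_X_of_ne hj, mul_zero])
    (fun h => absurd (Finset.mem_univ i) h), pderiv_pow, pderiv_X_self]
  push_cast
  ring

theorem MvPolynomial.IsHomogeneous.lap {d : ℕ} {p : MvPolynomial (Fin N) R}
    (hp : p.IsHomogeneous d) : (lap p).IsHomogeneous (d - 2) :=
  IsHomogeneous.sum _ _ _ fun _ _ => hp.pderiv.pderiv

theorem sum_rot_X_mul_pderiv {D : ℕ} {p : MvPolynomial (Fin N) R} (hp : p.IsHomogeneous D) :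
    ∑ j, ∑ k, rot j k (X j * pderiv k p) = XX R N * lap p - ((D : R) * (D + N - 2)) • p := by
  have expand (j k : Fin N) : rot j k (X j * pderiv k p) =
      X j ^ 2 * pderiv k (pderiv k p) + X j * pderiv k (X j) * pderiv k p
        - X k * pderiv k p - X j * X k * pderiv j (pderiv k p) := by
    simp only [rot, pderiv_mul, pderiv_X_self]
    ring
  have diagonal (j : Fin N) : ∑ k, X j * pderiv k (X j) * pderiv k p = X j * pderiv j p := by
    rw [Finset.sum_eq_single j (fun k _ hk => by rw [pderiv_X_of_ne hk.symm, mul_zero, zero_mul])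
      (fun h => absurd (Finset.mem_univ j) h), pderiv_X_self, mul_one]
  simp only [expand, Finset.sum_sub_distrib, Finset.sum_add_distrib, diagonal,
    hp.sum_X_mul_X_mul_pderiv_pderiv, hp.sum_X_mul_pderiv, Finset.sum_const, Finset.card_univ,
    Fintype.card_fin, XX, lap, Finset.sum_mul_sum]
  rw [← Nat.cast_smul_eq_nsmul R D, ← Nat.cast_smul_eq_nsmul R N, smul_smul]
  module

theorem lap_XX_mul {d : ℕ} {q : MvPolynomial (Fin N) R} (hq : q.IsHomogeneous d) :
    lap (XX R N * q) = XX R N * lap q + (2 * N + 4 * d : R) • q := by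
  have first (j : Fin N) : pderiv j (XX R N * q) = 2 • (X j * q) + XX R N * pderiv j q := by
    rw [pderiv_mul, pderiv_XX]
    ring
  have second (j : Fin N) : pderiv j (pderiv j (XX R N * q)) =
      2 * q + 4 * (X j * pderiv j q) + XX R N * pderiv j (pderiv j q) := by
    rw [first, map_add, map_nsmul, pderiv_mul, pderiv_mul, pderiv_X_self, pderiv_XX]
    ring
  simp only [lap, second, Finset.sum_add_distrib, ← Finset.mul_sum, hq.sum_X_mul_pderiv,
    Finset.sum_const, Finset.card_univ, Fintype.card_fin]
  simp only [smul_eq_C_mul, nsmul_eq_mul, map_add, map_mul, map_natCast, map_ofNat]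
  ring

theorem XX_mul_lap_XX_pow_mul {d : ℕ} {p : MvPolynomial (Fin N) R} (hp : p.IsHomogeneous d)
    (k : ℕ) : XX R N * lap (XX R N ^ k * p) =
      XX R N ^ (k + 1) * lap p + (2 * k * (2 * k + 2 * d + N - 2) : R) • (XX R N ^ k * p) := by
  induction k with
  | zero => simp
  | succ k ih =>
    rw [pow_succ', mul_assoc, lap_XX_mul ((isHomogeneous_XX.pow k).mul hp), mul_add, ih]
    simp only [smul_eq_C_mul, map_add, map_mul, map_sub, map_natCast, map_ofNat]
    push_cast
    ring

section Functional

variable {lam : MvPolynomial (Fin N) R →ₗ[R] R}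

theorem lam_XX_mul_lap (hrot : ∀ (j k : Fin N), j ≠ k → ∀ p, lam (rot j k p) = 0) {D : ℕ}
    {p : MvPolynomial (Fin N) R} (hp : p.IsHomogeneous D) :
    lam (XX R N * lap p) = D * (D + N - 2) * lam p := by
  have h : lam (∑ j, ∑ k, rot j k (X j * pderiv k p)) = 0 := by
    simp only [map_sum]
    refine Finset.sum_eq_zero fun j _ => Finset.sum_eq_zero fun k _ => ?_
    obtain rfl | hjk := eq_or_ne j k
    · rw [rot_self, map_zero]
    · exact hrot j k hjk _
  rwa [sum_rot_X_mul_pderiv hp, map_sub, map_smul, smul_eq_mul, sub_eq_zero] at h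

theorem lam_XX_pow_succ_mul_lap (hrot : ∀ (j k : Fin N), j ≠ k → ∀ p, lam (rot j k p) = 0)
    {d : ℕ} {p : MvPolynomial (Fin N) R} (hp : p.IsHomogeneous (d + 2)) (k : ℕ) :
    lam (XX R N ^ (k + 1) * lap p) = ((d + 2) * (d + N)) • lam (XX R N ^ k * p) := by
  have h := lam_XX_mul_lap hrot ((isHomogeneous_XX.pow k).mul hp)
  rw [XX_mul_lap_XX_pow_mul hp, map_add, map_smul, smul_eq_mul] at h
  rw [nsmul_eq_mul]
  push_cast at h ⊢
  linear_combination h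

theorem prod_smul_lam_XX_pow_mul (hrot : ∀ (j k : Fin N), j ≠ k → ∀ p, lam (rot j k p) = 0)
    (hone : ∀ n : ℕ, lam (XX R N ^ n) = 1) (m k : ℕ) {p : MvPolynomial (Fin N) R}
    (hp : p.IsHomogeneous (2 * m)) :
    (∏ i ∈ Finset.range m, (2 * i + 2) * (2 * i + N)) • lam (XX R N ^ k * p) =
      constantCoeff (lap^[m] p) := by
  induction m generalizing k p with
  | zero =>
    obtain ⟨c, rfl⟩ : ∃ c, p = C c :=
      ⟨_, totalDegree_eq_zero_iff_eq_C.mp ((totalDegree_zero_iff_isHomogeneous _).mpr hp)⟩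
    rw [mul_comm, ← smul_eq_C_mul, map_smul, hone]
    simp
  | succ m ih =>
    replace hp : p.IsHomogeneous (2 * m + 2) := hp
    rw [Finset.prod_range_succ, mul_smul, ← lam_XX_pow_succ_mul_lap hrot hp,
      Function.iterate_succ_apply, ih _ hp.lap]

end Functional

end Rotations

theorem factorial_mul_two_pow_mul_prod_sub (n N : ℕ) :
    n.factorial * 2 ^ n * ∏ i ∈ Finset.range n, (2 * n + N - 2 * (i + 1)) =
      ∏ i ∈ Finset.range n, (2 * i + 2) * (2 * i + N) := by
  have evens : ∏ i ∈ Finset.range n, (2 * i + 2) = n.factorial * 2 ^ n := by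
    simp_rw [show ∀ i, 2 * i + 2 = (i + 1) * 2 by omega, Finset.prod_mul_distrib,
      Finset.prod_range_add_one_eq_factorial, Finset.prod_const, Finset.card_range]
  rw [Finset.prod_mul_distrib, evens, ← Finset.prod_range_reflect (fun i => 2 * i + N)]
  exact congrArg _ (Finset.prod_congr rfl fun i hi => by rw [Finset.mem_range] at hi; omega)

theorem stmt17_general {R : Type*} [CommRing R] {N : ℕ}
    (lam : MvPolynomial (Fin N) R →ₗ[R] R)
    (hrot : ∀ (j k : Fin N), j ≠ k → ∀ p, lam (rot j k p) = 0)
    (hone : ∀ n : ℕ, lam (XX R N ^ n) = 1)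
    (n : ℕ)
    (p : MvPolynomial (Fin N) R) (hp : p.IsHomogeneous (2 * n)) :
    (n.factorial * 2 ^ n * ∏ i ∈ Finset.range n, (2 * n + N - 2 * (i + 1))) • lam p =
      constantCoeff (lap^[n] p) := by
  simpa [factorial_mul_two_pow_mul_prod_sub] using prod_smul_lam_XX_pow_mul hrot hone n 0 hp

/-- for `p` homogeneous of degree `2n` (`n ≥ 1`),
`n!·2^n·Π_{i=1}^{n}(2n+N−2i)·λ(p)` equals the constant coefficient of `Δ^n p`. -/
theorem stmt17 {R : Type*} [CommRing R] [Algebra ℚ R] {N : ℕ} (hN : 2 ≤ N)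
    (lam : MvPolynomial (Fin N) R →ₗ[R] R)
    (hrot : ∀ (j k : Fin N), j ≠ k → ∀ p, lam (rot j k p) = 0)
    (hone : ∀ n : ℕ, lam (XX R N ^ n) = 1)
    (n : ℕ) (hn : 1 ≤ n)
    (p : MvPolynomial (Fin N) R) (hp : p.IsHomogeneous (2 * n)) :
    (n.factorial * 2 ^ n * ∏ i ∈ Finset.range n, (2 * n + N - 2 * (i + 1))) • lam p =
      constantCoeff (lap^[n] p) :=
  stmt17_general lam hrot hone n p hp
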